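/- arXiv:0903.2816 — 4 statements merged into one kernel-verified Lean document; each statement's English description precedes it below -/
import Mathlib

section
/- Let T = (V, F, w) be a tree with positive edge weights, with Laplacian L_T, and let M be the Moore–Penrose pseudoinverse of L_T. Let u, v ∈ V with u ≠ v, and let e_1, …, e_k be the edges of the unique simple path in T from u to v. Then (ψ_u − ψ_v)ᵀ M (ψ_u − ψ_v) = Σ_{i=1}^{k} 1/w(e_i). -/
open Matrix

/-- The rank-one Laplacian contribution `(ψ_u - ψ_v)(ψ_u - ψ_v)ᵀ` of an edge,
as a function on unordered pairs. -/
noncomputable def edgeLap {V : Type*} [DecidableEq V] : Sym2 V → Matrix V V ℝ :=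
  Sym2.lift ⟨fun u v =>
      Matrix.vecMulVec (Pi.single u 1 - Pi.single v 1) (Pi.single u 1 - Pi.single v 1),
    by
      intro u v
      ext i j
      simp [Matrix.vecMulVec]
      ring⟩

/-- The Laplacian of a weighted graph: `L_G = Σ_{e∈E} w(e) (ψ_u - ψ_v)(ψ_u - ψ_v)ᵀ`. -/
noncomputable def lapW {V : Type*} [Fintype V] [DecidableEq V]
    (G : SimpleGraph V) [DecidableRel G.Adj] (w : Sym2 V → ℝ) : Matrix V V ℝ :=
  ∑ e ∈ G.edgeFinset, w e • edgeLap e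

/-!
View `lapW T w` as the conductance matrix of an electrical network and `χ = ψ_u - ψ_v` as a unit
current entering at `u` and leaving at `v`. Since every edge of a tree is a bridge, the potential
`f = Σ_{e on the path} (1 / w e) • 1_{side of T - e containing u}` satisfies `L f = χ`:
unit current crosses each path edge and nothing crosses the others. For any `M` with
`L M L = L` and `L` symmetric, `χᵀ M χ = fᵀ L M L f = fᵀ L f = fᵀ χ = f u - f v`, which is the
total resistance `Σ 1 / w e` of the path.
-/

open SimpleGraph

theorem Matrix.dotProduct_mulVec_eq_of_mul_mul_eq {n R : Type*} [Fintype n] [CommSemiring R]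
    {L M : Matrix n n R} (hL : L.IsSymm) (hLML : L * M * L = L) {f x : n → R}
    (hf : L *ᵥ f = x) : x ⬝ᵥ (M *ᵥ x) = f ⬝ᵥ x := by
  have hfL : L *ᵥ f = f ᵥ* L := by rw [← vecMul_transpose, hL.eq]
  calc x ⬝ᵥ (M *ᵥ x) = f ⬝ᵥ ((L * M * L) *ᵥ f) := by
        rw [← hf, hfL, ← dotProduct_mulVec, ← hfL, mulVec_mulVec, mulVec_mulVec]
    _ = f ⬝ᵥ x := by rw [hLML, hf]

section

variable {V : Type*}

lemma SimpleGraph.Walk.sum_darts_sub {G : SimpleGraph V} {β : Type*} [AddCommGroup β]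
    (g : V → β) {u v : V} (p : G.Walk u v) :
    (p.darts.map fun d => g d.fst - g d.snd).sum = g u - g v := by
  induction p with
  | nil => simp
  | cons h q ih => rw [darts_cons, List.map_cons, List.sum_cons, ih]; abel

lemma SimpleGraph.Walk.IsPath.reachable_deleteEdges_of_mem_darts {G : SimpleGraph V}
    {u v : V} {p : G.Walk u v} (hp : p.IsPath) {d : G.Dart} (hd : d ∈ p.darts) :
    (G.deleteEdges {d.edge}).Reachable u d.fst ∧ (G.deleteEdges {d.edge}).Reachable d.snd v := by
  induction p with
  | nil => simp at hd
  | @cons u x v h q ih =>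
    have hq : q.IsPath := ((cons_isPath_iff h q).mp hp).1
    have hux : s(u, x) ∉ q.edges := by
      have := hp.edges_nodup
      rw [edges_cons, List.nodup_cons] at this
      exact this.1
    rw [darts_cons, List.mem_cons] at hd
    rcases hd with rfl | hd
    · exact ⟨.rfl, ⟨q.toDeleteEdge _ hux⟩⟩
    · have hne : s(u, x) ≠ d.edge := fun heq => hux (heq ▸ List.mem_map_of_mem hd)
      obtain ⟨hx, hv⟩ := ih hq hd
      exact ⟨(deleteEdges_adj.mpr ⟨h, hne⟩).reachable.trans hx, hv⟩

noncomputable def cutSide (G : SimpleGraph V) (e : Sym2 V) (a : V) : V → ℝ :=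
  Set.indicator {x | (G.deleteEdges {e}).Reachable a x} 1

lemma cutSide_of_reachable {G : SimpleGraph V} {e : Sym2 V} {a x : V}
    (h : (G.deleteEdges {e}).Reachable a x) : cutSide G e a x = 1 :=
  Set.indicator_of_mem h 1

lemma cutSide_of_not_reachable {G : SimpleGraph V} {e : Sym2 V} {a x : V}
    (h : ¬ (G.deleteEdges {e}).Reachable a x) : cutSide G e a x = 0 :=
  Set.indicator_of_notMem h 1

lemma cutSide_eq_of_adj {G : SimpleGraph V} {e : Sym2 V} (a : V) {x y : V} (hxy : G.Adj x y)
    (hne : s(x, y) ≠ e) : cutSide G e a x = cutSide G e a y := by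
  have hxy' : (G.deleteEdges {e}).Adj x y := deleteEdges_adj.mpr ⟨hxy, hne⟩
  by_cases hx : (G.deleteEdges {e}).Reachable a x
  · rw [cutSide_of_reachable hx, cutSide_of_reachable (hx.trans hxy'.reachable)]
  · rw [cutSide_of_not_reachable hx,
      cutSide_of_not_reachable fun hy => hx (hy.trans hxy'.symm.reachable)]

noncomputable def pathPotential {G : SimpleGraph V} (w : Sym2 V → ℝ) {u v : V} (p : G.Walk u v) :
    V → ℝ :=
  (p.darts.map fun d => (1 / w d.edge) • cutSide G d.edge d.fst).sum

lemma pathPotential_sub {G : SimpleGraph V} (hG : G.IsAcyclic) (w : Sym2 V → ℝ) {u v : V}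
    {p : G.Walk u v} (hp : p.IsPath) :
    pathPotential w p u - pathPotential w p v = (p.edges.map fun e => 1 / w e).sum := by
  have hdart : ∀ d ∈ p.darts, cutSide G d.edge d.fst u - cutSide G d.edge d.fst v = 1 := by
    intro d hd
    obtain ⟨hu, hv⟩ := hp.reachable_deleteEdges_of_mem_darts hd
    have hbridge : ¬ (G.deleteEdges {d.edge}).Reachable d.fst d.snd :=
      isAcyclic_iff_forall_adj_isBridge.mp hG d.adj
    rw [cutSide_of_reachable hu.symm,
      cutSide_of_not_reachable fun h => hbridge (h.trans hv.symm), sub_zero]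
  change (Pi.evalAddMonoidHom (fun _ => ℝ) u - Pi.evalAddMonoidHom (fun _ => ℝ) v :
    (V → ℝ) →+ ℝ) (pathPotential w p) = _
  rw [pathPotential, map_list_sum, List.map_map, Walk.edges, List.map_map]
  refine congrArg List.sum (List.map_congr_left fun d hd => ?_)
  simp only [Function.comp_apply, AddMonoidHom.sub_apply, Pi.evalAddMonoidHom_apply,
    Pi.smul_apply, smul_eq_mul, ← mul_sub, hdart d hd, mul_one]

variable [DecidableEq V]

lemma edgeLap_mk (a b : V) :
    edgeLap s(a, b) =
      vecMulVec (Pi.single a 1 - Pi.single b 1) (Pi.single a 1 - Pi.single b 1) :=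
  rfl

lemma edgeLap_isSymm (e : Sym2 V) : (edgeLap e).IsSymm := by
  induction e using Sym2.ind with
  | _ a b => rw [edgeLap_mk, IsSymm, transpose_vecMulVec]

variable [Fintype V]

lemma edgeLap_mk_mulVec (a b : V) (f : V → ℝ) :
    edgeLap s(a, b) *ᵥ f = (f a - f b) • (Pi.single a 1 - Pi.single b 1 : V → ℝ) := by
  rw [edgeLap_mk, vecMulVec_mulVec, op_smul_eq_smul, sub_dotProduct, single_one_dotProduct,
    single_one_dotProduct]

lemma lapW_isSymm (G : SimpleGraph V) [DecidableRel G.Adj] (w : Sym2 V → ℝ) :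
    (lapW G w).IsSymm := by
  rw [IsSymm, lapW, transpose_sum]
  exact Finset.sum_congr rfl fun e _ => ((edgeLap_isSymm e).smul (w e)).eq

lemma lapW_mulVec_of_forall_adj_eq {G : SimpleGraph V} [DecidableRel G.Adj] (w : Sym2 V → ℝ)
    {a b : V} (hab : G.Adj a b) {f : V → ℝ}
    (hf : ∀ x y, G.Adj x y → s(x, y) ≠ s(a, b) → f x = f y) :
    lapW G w *ᵥ f = (w s(a, b) * (f a - f b)) • (Pi.single a 1 - Pi.single b 1 : V → ℝ) := by
  have hterm : ∀ e ∈ G.edgeFinset, e ≠ s(a, b) → (w e • edgeLap e) *ᵥ f = 0 := by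
    intro e he hne
    induction e using Sym2.ind with
    | _ x y =>
      rw [smul_mulVec, edgeLap_mk_mulVec, hf x y (G.mem_edgeFinset.mp he) hne, sub_self,
        zero_smul, smul_zero]
  rw [lapW, sum_mulVec, Finset.sum_eq_single_of_mem _ (G.mem_edgeFinset.mpr hab) hterm,
    smul_mulVec, edgeLap_mk_mulVec, smul_smul]

lemma lapW_mulVec_cutSide {G : SimpleGraph V} [DecidableRel G.Adj] (hG : G.IsAcyclic)
    (w : Sym2 V → ℝ) {a b : V} (hab : G.Adj a b) :
    lapW G w *ᵥ cutSide G s(a, b) a = w s(a, b) • (Pi.single a 1 - Pi.single b 1 : V → ℝ) := by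
  rw [lapW_mulVec_of_forall_adj_eq w hab fun x y hxy hne => cutSide_eq_of_adj a hxy hne,
    cutSide_of_reachable .rfl,
    cutSide_of_not_reachable (isAcyclic_iff_forall_adj_isBridge.mp hG hab), sub_zero, mul_one]

lemma lapW_mulVec_pathPotential {G : SimpleGraph V} [DecidableRel G.Adj] (hG : G.IsAcyclic)
    {w : Sym2 V → ℝ} (hw : ∀ e ∈ G.edgeSet, w e ≠ 0) {u v : V} (p : G.Walk u v) :
    lapW G w *ᵥ pathPotential w p = Pi.single u 1 - Pi.single v 1 := by
  have hdart : ∀ d : G.Dart, lapW G w *ᵥ ((1 / w d.edge) • cutSide G d.edge d.fst) =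
      Pi.single d.fst 1 - Pi.single d.snd 1 := fun d => by
    rw [mulVec_smul, show d.edge = s(d.fst, d.snd) from rfl, lapW_mulVec_cutSide hG w d.adj,
      smul_smul, one_div_mul_cancel (hw s(d.fst, d.snd) d.adj), one_smul]
  rw [pathPotential, ← mulVecLin_apply, map_list_sum, List.map_map]
  refine .trans ?_ (p.sum_darts_sub fun x => Pi.single x 1)
  exact congrArg List.sum (List.map_congr_left fun d _ => hdart d)

end

theorem tree_lap_pinv_quadForm_general {V : Type*} [Fintype V] [DecidableEq V]
    (T : SimpleGraph V) [DecidableRel T.Adj] (hT : T.IsTree)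
    (w : Sym2 V → ℝ) (hw : ∀ e ∈ T.edgeSet, 0 < w e)
    (M : Matrix V V ℝ)
    (hM1 : lapW T w * M * lapW T w = lapW T w)
    (u v : V) (p : T.Walk u v) (hp : p.IsPath) :
    (Pi.single u 1 - Pi.single v 1) ⬝ᵥ (M *ᵥ (Pi.single u 1 - Pi.single v 1)) =
      (p.edges.map fun e => 1 / w e).sum := by
  have hLf := lapW_mulVec_pathPotential hT.isAcyclic (fun e he => (hw e he).ne') p
  rw [dotProduct_mulVec_eq_of_mul_mul_eq (lapW_isSymm T w) hM1 hLf, dotProduct_sub,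
    dotProduct_single, dotProduct_single, mul_one, mul_one]
  exact pathPotential_sub hT.isAcyclic w hp

/-- If `T` is a tree with positive edge weights, `M` is the Moore–Penrose pseudoinverse of
its Laplacian `L_T`, `u ≠ v`, and `p` is the (unique) simple path in `T` from `u` to `v`
with edges `e_1, …, e_k`, then `(ψ_u − ψ_v)ᵀ M (ψ_u − ψ_v) = Σ_i 1 / w(e_i)`. -/
theorem tree_lap_pinv_quadForm {V : Type*} [Fintype V] [DecidableEq V]
    (T : SimpleGraph V) [DecidableRel T.Adj] (hT : T.IsTree)
    (w : Sym2 V → ℝ) (hw : ∀ e ∈ T.edgeSet, 0 < w e)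
    (M : Matrix V V ℝ)
    (hM1 : lapW T w * M * lapW T w = lapW T w)
    (hM2 : M * lapW T w * M = M)
    (hM3 : (lapW T w * M)ᵀ = lapW T w * M)
    (hM4 : (M * lapW T w)ᵀ = M * lapW T w)
    (u v : V) (huv : u ≠ v) (p : T.Walk u v) (hp : p.IsPath) :
    (Pi.single u 1 - Pi.single v 1) ⬝ᵥ (M *ᵥ (Pi.single u 1 - Pi.single v 1)) =
      (p.edges.map fun e => 1 / w e).sum :=
  tree_lap_pinv_quadForm_general T hT w hw M hM1 u v p hp
end

section
/- Let A and B be real symmetric positive semidefinite n×n matrices. Then every root of the characteristic polynomial of the product A · B over ℂ is a nonnegative real number; that is, every eigenvalue λ of A · B satisfies Im(λ) = 0 and Re(λ) ≥ 0. -/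
/-! If `A, B ⪰ 0` and `A (B v) = μ v` with `v ≠ 0`, then either `B v = 0`, forcing `μ = 0`, or
`v⋆ B v > 0`, and `μ (v⋆ B v) = v⋆ B A B v = (B v)⋆ A (B v) ≥ 0` forces `μ ≥ 0`. Real
positive semidefinite matrices stay positive semidefinite over `ℂ`, since they are of the form
`Cᴴ C`. -/

open Matrix Polynomial
open scoped ComplexOrder

namespace Matrix

variable {ι : Type*} [Fintype ι]

theorem IsSymm.posSemidef_of_dotProduct_mulVec_nonneg {R : Type*} [CommRing R] [PartialOrder R]
    [StarRing R] [TrivialStar R] {M : Matrix ι ι R} (hM : M.IsSymm)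
    (h : ∀ x : ι → R, 0 ≤ x ⬝ᵥ (M *ᵥ x)) : M.PosSemidef :=
  .of_dotProduct_mulVec_nonneg (isHermitian_iff_isSymm.mpr hM) (by simpa only [star_trivial])

variable {𝕜 : Type*} [RCLike 𝕜]

open scoped MatrixOrder in
theorem PosSemidef.map_ofReal {M : Matrix ι ι ℝ} (hM : M.PosSemidef) :
    (M.map (algebraMap ℝ 𝕜)).PosSemidef := by
  classical
  obtain ⟨C, rfl⟩ := CStarAlgebra.nonneg_iff_eq_star_mul_self.mp hM.nonneg
  rw [star_eq_conjTranspose, Matrix.map_mul,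
    conjTranspose_map _ fun x ↦ (RCLike.conj_ofReal x).symm]
  exact posSemidef_conjTranspose_mul_self _

theorem PosSemidef.nonneg_of_mulVec_mulVec_eq_smul {A B : Matrix ι ι 𝕜} (hA : A.PosSemidef)
    (hB : B.PosSemidef) {μ : 𝕜} {v : ι → 𝕜} (hv : v ≠ 0) (h : A *ᵥ (B *ᵥ v) = μ • v) :
    0 ≤ μ := by
  by_cases hBv : B *ᵥ v = 0
  · have hμv : μ • v = 0 := by rw [← h, hBv, mulVec_zero]
    simp [(smul_eq_zero.mp hμv).resolve_right hv]
  have hb : 0 < star v ⬝ᵥ (B *ᵥ v) :=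
    (hB.dotProduct_mulVec_nonneg v).lt_of_ne' (mt (hB.dotProduct_mulVec_zero_iff v).mp hBv)
  have hc : 0 ≤ star v ⬝ᵥ ((Bᴴ * A * B) *ᵥ v) :=
    (hA.conjTranspose_mul_mul_same B).dotProduct_mulVec_nonneg v
  rw [hB.1.eq, ← mulVec_mulVec, ← mulVec_mulVec, h, mulVec_smul, dotProduct_smul,
    smul_eq_mul] at hc
  exact le_of_mul_le_mul_right (by rwa [zero_mul]) hb

theorem PosSemidef.nonneg_of_isRoot_charpoly_mul [DecidableEq ι] {A B : Matrix ι ι 𝕜}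
    (hA : A.PosSemidef) (hB : B.PosSemidef) {μ : 𝕜} (hμ : (A * B).charpoly.IsRoot μ) :
    0 ≤ μ := by
  rw [← charpoly_toLin', ← Module.End.hasEigenvalue_iff_isRoot_charpoly] at hμ
  obtain ⟨v, hv⟩ := hμ.exists_hasEigenvector
  refine hA.nonneg_of_mulVec_mulVec_eq_smul hB hv.2 ?_
  rw [mulVec_mulVec, ← toLin'_apply, hv.apply_eq_smul]

end Matrix

/-- If `A` and `B` are real symmetric positive semidefinite `n × n` matrices, then every
root of the characteristic polynomial of `A · B` over `ℂ` is a nonnegative real number. -/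
theorem eigenvalues_mul_posSemidef_real_nonneg {n : ℕ}
    (A B : Matrix (Fin n) (Fin n) ℝ)
    (hA : A.IsSymm) (hB : B.IsSymm)
    (hA' : ∀ x : Fin n → ℝ, 0 ≤ x ⬝ᵥ (A *ᵥ x))
    (hB' : ∀ x : Fin n → ℝ, 0 ≤ x ⬝ᵥ (B *ᵥ x)) :
    ∀ μ : ℂ, (((A * B).charpoly).map (algebraMap ℝ ℂ)).IsRoot μ →
      μ.im = 0 ∧ 0 ≤ μ.re := by
  intro μ hμ
  rw [← charpoly_map, Matrix.map_mul] at hμ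
  have hAℂ := (hA.posSemidef_of_dotProduct_mulVec_nonneg hA').map_ofReal (𝕜 := ℂ)
  have hBℂ := (hB.posSemidef_of_dotProduct_mulVec_nonneg hB').map_ofReal (𝕜 := ℂ)
  obtain ⟨hre, him⟩ := Complex.nonneg_iff.mp (hAℂ.nonneg_of_isRoot_charpoly_mul hBℂ hμ)
  exact ⟨him.symm, hre⟩
end

section
/- Let G = (V, E, w) be a connected weighted graph with positive edge weights, let T = (V, F, w) be a spanning tree of G, with Laplacians L_G and L_T, and let M be the Moore–Penrose pseudoinverse of L_T. Then every eigenvalue λ of L_G · M (root of its characteristic polynomial over ℂ) is either equal to 0 or is a real number with λ ≥ 1. -/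
open Matrix

/-!
Write `L = L_T` and `A = L_G`. Since `T ≤ G`, `A - L = L_{G \ T}` is again a weighted
Laplacian, so `0 ≤ L ≤ A`. Let `A M v = μ v` with `μ ≠ 0` and put `y = M v`. The Penrose
equations make `M` Hermitian and give `M L y = y`, hence `y* v = y* L y` and
`y* A y = μ · y* L y`. If `y* L y` were `0`, then `L y = 0`, so `y = M L y = 0` and
`μ v = A y = 0`. Hence `μ = y* A y / y* L y ≥ 1`.
-/

open scoped ComplexOrder

namespace Matrix

variable {m n R : Type*} [Fintype m] [Fintype n]

structure IsMoorePenroseInverse [Semiring R] [Star R] (A : Matrix m n R) (B : Matrix n m R) :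
    Prop where
  self_mul_mul_self : A * B * A = A
  mul_self_mul : B * A * B = B
  isHermitian_self_mul : (A * B).IsHermitian
  isHermitian_mul_self : (B * A).IsHermitian

namespace IsMoorePenroseInverse

variable [Semiring R] [StarRing R] {A : Matrix m n R} {B C : Matrix n m R}

theorem conjTranspose (h : IsMoorePenroseInverse A B) : IsMoorePenroseInverse Aᴴ Bᴴ where
  self_mul_mul_self := by
    rw [← conjTranspose_mul, ← conjTranspose_mul, ← Matrix.mul_assoc, h.self_mul_mul_self]
  mul_self_mul := by
    rw [← conjTranspose_mul, ← conjTranspose_mul, ← Matrix.mul_assoc, h.mul_self_mul]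
  isHermitian_self_mul := by rw [← conjTranspose_mul]; exact h.isHermitian_mul_self.conjTranspose
  isHermitian_mul_self := by rw [← conjTranspose_mul]; exact h.isHermitian_self_mul.conjTranspose

theorem self_mul_eq (hB : IsMoorePenroseInverse A B) (hC : IsMoorePenroseInverse A C) :
    A * B = A * C :=
  calc A * B = Bᴴ * Aᴴ := by rw [← conjTranspose_mul, hB.isHermitian_self_mul.eq]
    _ = Bᴴ * (A * C * A)ᴴ := by rw [hC.self_mul_mul_self]
    _ = (A * B)ᴴ * (A * C)ᴴ := by simp only [conjTranspose_mul, Matrix.mul_assoc]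
    _ = A * B * A * C := by
      rw [hB.isHermitian_self_mul.eq, hC.isHermitian_self_mul.eq, Matrix.mul_assoc (A * B)]
    _ = A * C := by rw [hB.self_mul_mul_self]

theorem unique (hB : IsMoorePenroseInverse A B) (hC : IsMoorePenroseInverse A C) : B = C := by
  have hBA : B * A = C * A := by
    simpa using congrArg Matrix.conjTranspose (hB.conjTranspose.self_mul_eq hC.conjTranspose)
  calc B = B * (A * B) := by rw [← Matrix.mul_assoc, hB.mul_self_mul]
    _ = C * A * C := by rw [hB.self_mul_eq hC, ← Matrix.mul_assoc, hBA]
    _ = C := hC.mul_self_mul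

theorem isHermitian {A B : Matrix n n R} (hA : A.IsHermitian) (h : IsMoorePenroseInverse A B) :
    B.IsHermitian :=
  (h.unique (hA.eq ▸ h.conjTranspose)).symm

theorem map {S : Type*} [Semiring S] [StarRing S] (h : IsMoorePenroseInverse A B) (f : R →+* S)
    (hf : Function.Semiconj f star star) : IsMoorePenroseInverse (A.map f) (B.map f) where
  self_mul_mul_self := by simp only [← Matrix.map_mul, h.self_mul_mul_self]
  mul_self_mul := by simp only [← Matrix.map_mul, h.mul_self_mul]
  isHermitian_self_mul := by
    rw [IsHermitian, ← Matrix.map_mul, ← conjTranspose_map _ hf, h.isHermitian_self_mul.eq]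
  isHermitian_mul_self := by
    rw [IsHermitian, ← Matrix.map_mul, ← conjTranspose_map _ hf, h.isHermitian_mul_self.eq]

end IsMoorePenroseInverse

theorem exists_mulVec_eq_smul_of_isRoot_charpoly {K : Type*} [Field K] [DecidableEq n]
    {B : Matrix n n K} {μ : K} (h : B.charpoly.IsRoot μ) : ∃ v ≠ 0, B *ᵥ v = μ • v := by
  rw [← mem_spectrum_iff_isRoot_charpoly, ← spectrum_toLin',
    ← Module.End.hasEigenvalue_iff_mem_spectrum] at h
  obtain ⟨v, hv⟩ := h.exists_hasEigenvector
  exact ⟨v, hv.2, by simpa using hv.apply_eq_smul⟩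

theorem one_le_of_mul_mulVec_eq_smul {𝕜 : Type*} [RCLike 𝕜] {A L M : Matrix n n 𝕜}
    (hL : L.PosSemidef) (hAL : (A - L).PosSemidef) (hM : IsMoorePenroseInverse L M)
    {v : n → 𝕜} (hv : v ≠ 0) {μ : 𝕜} (hμ : μ ≠ 0) (h : (A * M) *ᵥ v = μ • v) : 1 ≤ μ := by
  set y := M *ᵥ v
  have hAy : A *ᵥ y = μ • v := by rw [mulVec_mulVec, h]
  have hMLy : M *ᵥ (L *ᵥ y) = y := by
    simp only [y, mulVec_mulVec, ← Matrix.mul_assoc, hM.mul_self_mul]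
  have hstar_y : star y = star v ᵥ* M := by
    rw [star_mulVec, (hM.isHermitian hL.isHermitian).eq]
  have hyv : star y ⬝ᵥ v = star y ⬝ᵥ L *ᵥ y := by
    rw [hstar_y, ← dotProduct_mulVec, ← dotProduct_mulVec, hMLy]
  set r := star y ⬝ᵥ L *ᵥ y
  have hr : r ≠ 0 := fun hr0 => by
    have hLy : L *ᵥ y = 0 := (hL.dotProduct_mulVec_zero_iff y).1 hr0
    have : μ • v = 0 := by rw [← hAy, ← hMLy, hLy, mulVec_zero, mulVec_zero]
    exact (smul_ne_zero hμ hv) this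
  have hr_le : r ≤ μ * r := by
    have := hAL.dotProduct_mulVec_nonneg y
    rwa [sub_mulVec, dotProduct_sub, hAy, dotProduct_smul, smul_eq_mul, hyv,
      sub_nonneg] at this
  exact one_le_of_le_mul_right₀ ((hL.dotProduct_mulVec_nonneg y).lt_of_ne' hr) hr_le

end Matrix

section Laplacian

variable {V : Type*} [Fintype V] [DecidableEq V]

theorem posSemidef_map_edgeLap {𝕜 : Type*} [RCLike 𝕜] (e : Sym2 V) :
    ((edgeLap e).map (algebraMap ℝ 𝕜)).PosSemidef := by
  induction e using Sym2.ind with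
  | _ u v =>
    convert posSemidef_vecMulVec_self_star (Pi.single u 1 - Pi.single v 1 : V → 𝕜) using 1
    ext i j
    simp [edgeLap, vecMulVec, Pi.single_apply, apply_ite (algebraMap ℝ 𝕜)]

theorem posSemidef_map_lapW {𝕜 : Type*} [RCLike 𝕜] (G : SimpleGraph V) [DecidableRel G.Adj]
    {w : Sym2 V → ℝ} (hw : ∀ e ∈ G.edgeSet, 0 ≤ w e) :
    ((lapW G w).map (algebraMap ℝ 𝕜)).PosSemidef := by
  change ((Algebra.ofId ℝ 𝕜).mapMatrix (lapW G w)).PosSemidef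
  rw [lapW, map_sum]
  refine posSemidef_sum _ fun e he => ?_
  rw [map_smul]
  exact (posSemidef_map_edgeLap e).smul (hw e (SimpleGraph.mem_edgeFinset.1 he))

theorem lapW_sub_lapW_of_le {G T : SimpleGraph V} [DecidableRel G.Adj] [DecidableRel T.Adj]
    (h : T ≤ G) (w : Sym2 V → ℝ) : lapW G w - lapW T w = lapW (G \ T) w := by
  rw [lapW, lapW, lapW, ← Finset.sum_sdiff_eq_sub (SimpleGraph.edgeFinset_mono h)]
  congr 1
  ext e
  simp [SimpleGraph.edgeSet_sdiff]

end Laplacian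

open Polynomial in
theorem eigenvalues_lap_mul_pinv_zero_or_ge_one_general {V : Type*} [Fintype V] [DecidableEq V]
    (G T : SimpleGraph V) [DecidableRel G.Adj] [DecidableRel T.Adj]
    (hTG : T ≤ G)
    (w : Sym2 V → ℝ) (hw : ∀ e ∈ G.edgeSet, 0 < w e)
    (M : Matrix V V ℝ)
    (hM1 : lapW T w * M * lapW T w = lapW T w)
    (hM2 : M * lapW T w * M = M)
    (hM3 : (lapW T w * M)ᵀ = lapW T w * M)
    (hM4 : (M * lapW T w)ᵀ = M * lapW T w) :
    ∀ μ : ℂ, (((lapW G w * M).charpoly).map (algebraMap ℝ ℂ)).IsRoot μ →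
      μ = 0 ∨ (μ.im = 0 ∧ 1 ≤ μ.re) := by
  intro μ hμ
  have hL := posSemidef_map_lapW (𝕜 := ℂ) T fun e he =>
    (hw e (SimpleGraph.edgeSet_mono hTG he)).le
  have hAL : ((lapW G w).map (algebraMap ℝ ℂ) - (lapW T w).map (algebraMap ℝ ℂ)).PosSemidef := by
    rw [← Matrix.map_sub _ (map_sub _), lapW_sub_lapW_of_le hTG]
    exact posSemidef_map_lapW _ fun e he => (hw e (SimpleGraph.edgeSet_sdiff G T ▸ he).1).le
  have hM : IsMoorePenroseInverse (lapW T w) M :=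
    ⟨hM1, hM2, (conjTranspose_eq_transpose_of_trivial _).trans hM3,
      (conjTranspose_eq_transpose_of_trivial _).trans hM4⟩
  rw [← charpoly_map, Matrix.map_mul] at hμ
  obtain ⟨v, hv, hAMv⟩ := exists_mulVec_eq_smul_of_isRoot_charpoly hμ
  rcases eq_or_ne μ 0 with hμ0 | hμ0
  · exact .inl hμ0
  · have h1μ := one_le_of_mul_mulVec_eq_smul hL hAL
      (hM.map _ fun x => (Complex.conj_ofReal x).symm) hv hμ0 hAMv
    exact .inr ⟨(Complex.le_def.1 h1μ).2.symm, (Complex.le_def.1 h1μ).1⟩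

open Polynomial in
/-- If `G` is a connected weighted graph with positive edge weights, `T` a spanning tree of
`G`, and `M` the Moore–Penrose pseudoinverse of `L_T`, then every eigenvalue of `L_G · M`
(root of its characteristic polynomial over `ℂ`) is either `0` or a real number `≥ 1`. -/
theorem eigenvalues_lap_mul_pinv_zero_or_ge_one {V : Type*} [Fintype V] [DecidableEq V]
    (G T : SimpleGraph V) [DecidableRel G.Adj] [DecidableRel T.Adj]
    (hG : G.Connected) (hT : T.IsTree) (hTG : T ≤ G)
    (w : Sym2 V → ℝ) (hw : ∀ e ∈ G.edgeSet, 0 < w e)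
    (M : Matrix V V ℝ)
    (hM1 : lapW T w * M * lapW T w = lapW T w)
    (hM2 : M * lapW T w * M = M)
    (hM3 : (lapW T w * M)ᵀ = lapW T w * M)
    (hM4 : (M * lapW T w)ᵀ = M * lapW T w) :
    ∀ μ : ℂ, (((lapW G w * M).charpoly).map (algebraMap ℝ ℂ)).IsRoot μ →
      μ = 0 ∨ (μ.im = 0 ∧ 1 ≤ μ.re) :=
  eigenvalues_lap_mul_pinv_zero_or_ge_one_general G T hTG w hw M hM1 hM2 hM3 hM4
end

section
/- Let 0 < l ≤ u be real numbers, let q be a natural number, let Λ be a finite multiset of real numbers such that every element of Λ is at least l and at most q elements of Λ (counted with multiplicity) are greater than u, and let 0 < ε < 2. Then there exists a real polynomial p of degree at most q + ⌈(ln(2/ε)/2)·√(u/l)⌉ such that p(0) = 1 and |p(λ)| ≤ ε for every λ ∈ Λ. -/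
/-!
The outliers `a > u` are killed by the factor `∏ (1 - x / a)`, which has degree at most `q`,
equals `1` at `0` and has modulus at most `1` on `[0, u]`. On `[l, u]` we use the Chebyshev
polynomial `T_k((u + l - 2x) / (u - l)) / T_k((u + l) / (u - l))`. Writing
`(u + l) / (u - l) = cosh t` with `t = log ((1 + r) / (1 - r)) ≥ 2r`, `r = √(l / u)`, it is
bounded there by `1 / cosh (k t) ≤ 2 exp (-2 k √(l / u))`, which is at most `ε` for the stated
`k`. When `l = u` the single factor `1 - x / l` takes the place of the Chebyshev polynomial.
-/

open Polynomial

theorem Multiset.abs_prod_le_one {R : Type*} [CommRing R] [LinearOrder R] [IsStrictOrderedRing R]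
    {s : Multiset R} (h : ∀ y ∈ s, |y| ≤ 1) : |s.prod| ≤ 1 := by
  induction s using Multiset.induction_on with
  | empty => simp
  | cons a s ih =>
    rw [Multiset.prod_cons, abs_mul]
    exact mul_le_one₀ (h a (s.mem_cons_self a)) (abs_nonneg _)
      (ih fun y hy => h y (Multiset.mem_cons_of_mem hy))

namespace Real

theorem two_mul_le_log_one_add_div_one_sub {r : ℝ} (h0 : 0 ≤ r) (h1 : r < 1) :
    2 * r ≤ log ((1 + r) / (1 - r)) := by
  rw [log_div (by linarith) (by linarith)]
  -- the first term of the series `∑ 2 r ^ (2k+1) / (2k+1)`, all of whose terms are nonnegative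
  simpa using le_hasSum (hasSum_log_sub_log_of_abs_lt_one (abs_lt.mpr ⟨by linarith, h1⟩)) 0
    fun j _ => by positivity

theorem cosh_log_one_add_div_one_sub {r : ℝ} (hr : |r| < 1) :
    cosh (log ((1 + r) / (1 - r))) = (1 + r ^ 2) / (1 - r ^ 2) := by
  obtain ⟨hr0, hr1⟩ := abs_lt.mp hr
  have h1 : 0 < 1 + r := by linarith
  have h2 : 0 < 1 - r := by linarith
  have h3 : 1 - r ^ 2 ≠ 0 := by nlinarith
  rw [cosh_log (div_pos h1 h2), inv_div]
  field_simp
  ring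

theorem two_mul_exp_neg_le_of_log_two_div_le {ε a : ℝ} (hε : 0 < ε) (h : log (2 / ε) ≤ a) :
    2 * exp (-a) ≤ ε := by
  have : exp (-a) ≤ ε / 2 :=
    calc exp (-a) ≤ exp (-log (2 / ε)) := exp_le_exp.mpr (neg_le_neg h)
      _ = ε / 2 := by rw [exp_neg, exp_log (by positivity), inv_div]
  linarith

theorem le_two_mul_ceil_mul_sqrt_div (a : ℝ) {l u : ℝ} (hl : 0 < l) (hu : 0 < u) :
    a ≤ 2 * ⌈a / 2 * √(u / l)⌉₊ * √(l / u) := by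
  have hsqrt : √(u / l) * √(l / u) = 1 := by
    rw [← sqrt_mul (div_nonneg hu.le hl.le), show u / l * (l / u) = 1 by field_simp, sqrt_one]
  calc a = a / 2 * √(u / l) * (2 * √(l / u)) := by linear_combination (-a) * hsqrt
    _ ≤ ⌈a / 2 * √(u / l)⌉₊ * (2 * √(l / u)) := by gcongr; exact Nat.le_ceil _
    _ = 2 * ⌈a / 2 * √(u / l)⌉₊ * √(l / u) := by ring

end Real

namespace Polynomial

noncomputable def prodOneSubXDiv (s : Multiset ℝ) : ℝ[X] :=
  (s.map fun a => 1 - C a⁻¹ * X).prod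

theorem natDegree_prodOneSubXDiv_le (s : Multiset ℝ) :
    (prodOneSubXDiv s).natDegree ≤ Multiset.card s := by
  induction s using Multiset.induction_on with
  | empty => simp [prodOneSubXDiv]
  | cons a s ih =>
    have hfactor : (1 - C a⁻¹ * X).natDegree ≤ 1 :=
      (natDegree_sub_le _ _).trans
        (max_le (by simp) ((natDegree_C_mul_le _ _).trans natDegree_X_le))
    rw [prodOneSubXDiv, Multiset.map_cons, Multiset.prod_cons, Multiset.card_cons]
    exact natDegree_mul_le.trans (by rw [prodOneSubXDiv] at ih; omega)

theorem eval_prodOneSubXDiv (s : Multiset ℝ) (x : ℝ) :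
    (prodOneSubXDiv s).eval x = (s.map fun a => 1 - a⁻¹ * x).prod := by
  simp [prodOneSubXDiv, eval_multiset_prod, Multiset.map_map]

@[simp]
theorem eval_zero_prodOneSubXDiv (s : Multiset ℝ) : (prodOneSubXDiv s).eval 0 = 1 := by
  simp [eval_prodOneSubXDiv]

theorem eval_prodOneSubXDiv_of_mem {s : Multiset ℝ} {a : ℝ} (ha : a ∈ s) (ha0 : a ≠ 0) :
    (prodOneSubXDiv s).eval a = 0 := by
  rw [eval_prodOneSubXDiv]
  exact Multiset.prod_eq_zero (Multiset.mem_map.mpr ⟨a, ha, by simp [ha0]⟩)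

theorem abs_eval_prodOneSubXDiv_le_one {s : Multiset ℝ} {x : ℝ} (hx : 0 ≤ x)
    (hxs : ∀ a ∈ s, x ≤ a) : |(prodOneSubXDiv s).eval x| ≤ 1 := by
  rw [eval_prodOneSubXDiv]
  refine Multiset.abs_prod_le_one fun y hy => ?_
  obtain ⟨a, ha, rfl⟩ := Multiset.mem_map.mp hy
  have hxa : a⁻¹ * x ≤ 1 := inv_mul_le_one_of_le₀ (hxs a ha) (hx.trans (hxs a ha))
  have : 0 ≤ a⁻¹ * x := mul_nonneg (inv_nonneg.mpr (hx.trans (hxs a ha))) hx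
  rw [abs_le]
  constructor <;> linarith

theorem exists_poly_small_on_multiset_of_small_on_Icc {l u δ : ℝ} {q n : ℕ} {Λ : Multiset ℝ}
    {h : ℝ[X]} (hl : 0 ≤ l) (hlu : l ≤ u) (hΛ : ∀ x ∈ Λ, l ≤ x)
    (hq : (Λ.filter fun x => u < x).card ≤ q) (hδ : 0 ≤ δ) (hdeg : h.natDegree ≤ n)
    (h0 : h.eval 0 = 1) (hh : ∀ x ∈ Set.Icc l u, |h.eval x| ≤ δ) :
    ∃ p : ℝ[X], p.natDegree ≤ q + n ∧ p.eval 0 = 1 ∧ ∀ x ∈ Λ, |p.eval x| ≤ δ := by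
  set outliers := Λ.filter fun x => u < x
  refine ⟨prodOneSubXDiv outliers * h,
    natDegree_mul_le.trans (add_le_add ((natDegree_prodOneSubXDiv_le _).trans hq) hdeg),
    by rw [eval_mul, eval_zero_prodOneSubXDiv, h0, one_mul], fun x hx => ?_⟩
  rcases lt_or_ge u x with hux | hxu
  · rw [eval_mul, eval_prodOneSubXDiv_of_mem (Multiset.mem_filter.mpr ⟨hx, hux⟩) (by linarith),
      zero_mul, abs_zero]
    exact hδ
  · have hxs : ∀ a ∈ outliers, x ≤ a := fun a ha =>
      hxu.trans (Multiset.mem_filter.mp ha).2.le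
    calc |(prodOneSubXDiv outliers * h).eval x| ≤ 1 * δ := by
          rw [eval_mul, abs_mul]
          gcongr
          exacts [abs_eval_prodOneSubXDiv_le_one (hl.trans (hΛ x hx)) hxs,
            hh x ⟨hΛ x hx, hxu⟩]
      _ = δ := one_mul δ

open Polynomial.Chebyshev Real

noncomputable def chebyshevResidual (l u : ℝ) (n : ℕ) : ℝ[X] :=
  C ((T ℝ n).eval ((u + l) / (u - l)))⁻¹ *
    (T ℝ n).comp (C ((u + l) / (u - l)) - C (2 / (u - l)) * X)

variable {l u : ℝ}

theorem natDegree_chebyshevResidual_le (l u : ℝ) (n : ℕ) :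
    (chebyshevResidual l u n).natDegree ≤ n := by
  have hT : (T ℝ n).natDegree = n := by simp [natDegree_T]
  have haffine : (C ((u + l) / (u - l)) - C (2 / (u - l)) * X).natDegree ≤ 1 :=
    (natDegree_sub_le _ _).trans
      (max_le (by simp) ((natDegree_C_mul_le _ _).trans natDegree_X_le))
  calc (chebyshevResidual l u n).natDegree
      ≤ (T ℝ n).natDegree * (C ((u + l) / (u - l)) - C (2 / (u - l)) * X).natDegree :=
        (natDegree_C_mul_le _ _).trans natDegree_comp_le
    _ ≤ n * 1 := by rw [hT]; exact Nat.mul_le_mul_left n haffine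
    _ = n := mul_one n

theorem exp_le_two_mul_eval_T (hl : 0 ≤ l) (hlu : l < u) (n : ℕ) :
    exp (2 * n * √(l / u)) ≤ 2 * (T ℝ n).eval ((u + l) / (u - l)) := by
  have hu : 0 < u := hl.trans_lt hlu
  set r := √(l / u)
  have hr0 : 0 ≤ r := sqrt_nonneg _
  have hr2 : r ^ 2 = l / u := sq_sqrt (div_nonneg hl hu.le)
  have hr1 : r < 1 := by
    rw [show (1 : ℝ) = √1 from sqrt_one.symm]
    exact sqrt_lt_sqrt (div_nonneg hl hu.le) ((div_lt_one hu).mpr hlu)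
  set t := log ((1 + r) / (1 - r))
  have hcosh : (u + l) / (u - l) = cosh t := by
    rw [cosh_log_one_add_div_one_sub (abs_lt.mpr ⟨by linarith, hr1⟩), hr2]
    field_simp
  have ht : 2 * r ≤ t := two_mul_le_log_one_add_div_one_sub hr0 hr1
  have hexp : exp (2 * n * r) ≤ exp (n * t) := by
    rw [exp_le_exp]
    nlinarith [n.cast_nonneg (α := ℝ)]
  rw [hcosh, T_real_cosh, cosh_eq]
  push_cast
  linarith [exp_pos (-(n * t))]

theorem eval_T_pos (hl : 0 ≤ l) (hlu : l < u) (n : ℕ) :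
    0 < (T ℝ n).eval ((u + l) / (u - l)) := by
  linarith [exp_le_two_mul_eval_T hl hlu n, exp_pos (2 * n * √(l / u))]

theorem eval_zero_chebyshevResidual (hl : 0 ≤ l) (hlu : l < u) (n : ℕ) :
    (chebyshevResidual l u n).eval 0 = 1 := by
  simp only [chebyshevResidual, eval_mul, eval_C, eval_comp, eval_sub, eval_X, mul_zero, sub_zero]
  exact inv_mul_cancel₀ (eval_T_pos hl hlu n).ne'

theorem abs_eval_chebyshevResidual_le (hl : 0 ≤ l) (hlu : l < u) (n : ℕ) (x : ℝ)
    (hx : x ∈ Set.Icc l u) :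
    |(chebyshevResidual l u n).eval x| ≤ 2 * exp (-(2 * n * √(l / u))) := by
  have hul : 0 < u - l := by linarith
  have hpos := eval_T_pos hl hlu n
  have haffine : |(C ((u + l) / (u - l)) - C (2 / (u - l)) * X).eval x| ≤ 1 := by
    rw [eval_sub, eval_mul, eval_C, eval_C, eval_X,
      show (u + l) / (u - l) - 2 / (u - l) * x = (u + l - 2 * x) / (u - l) by ring,
      abs_le, le_div_iff₀ hul, div_le_one hul]
    constructor <;> linarith [hx.1, hx.2]
  rw [chebyshevResidual, eval_mul, eval_C, eval_comp, abs_mul, abs_inv,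
    abs_of_pos hpos, exp_neg, ← div_eq_mul_inv, le_div_iff₀ (exp_pos _)]
  calc _ ≤ ((T ℝ n).eval ((u + l) / (u - l)))⁻¹ * 1 *
        (2 * (T ℝ n).eval ((u + l) / (u - l))) := by
        gcongr
        exacts [abs_eval_T_real_le_one _ haffine, exp_le_two_mul_eval_T hl hlu n]
    _ = 2 := by field_simp

end Polynomial

open Real in
/-- The polynomial-approximation content of the Axelsson–Lindskog bound: if every element
of a finite multiset `Λ` of reals is at least `l > 0` and at most `q` of them (with
multiplicity) exceed `u ≥ l`, then for every `0 < ε < 2` there is a real polynomial `p` of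
degree at most `q + ⌈(ln(2/ε)/2)·√(u/l)⌉` with `p(0) = 1` and `|p(λ)| ≤ ε` on `Λ`. -/
theorem exists_low_degree_poly_small_on_spectrum
    (l u : ℝ) (hl : 0 < l) (hlu : l ≤ u) (q : ℕ) (Λ : Multiset ℝ)
    (hΛ : ∀ x ∈ Λ, l ≤ x) (hq : (Λ.filter fun x => u < x).card ≤ q)
    (ε : ℝ) (hε0 : 0 < ε) (hε2 : ε < 2) :
    ∃ p : ℝ[X],
      p.natDegree ≤ q + ⌈Real.log (2 / ε) / 2 * Real.sqrt (u / l)⌉₊ ∧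
      p.eval 0 = 1 ∧ ∀ x ∈ Λ, |p.eval x| ≤ ε := by
  set k := ⌈Real.log (2 / ε) / 2 * Real.sqrt (u / l)⌉₊
  rcases hlu.eq_or_lt with rfl | hlu
  · have hk : 1 ≤ k := Nat.one_le_ceil_iff.mpr <|
      mul_pos (half_pos (log_pos ((one_lt_div hε0).mpr hε2))) (sqrt_pos.mpr (div_pos hl hl))
    have hroot : ∀ x ∈ Set.Icc l l, |(prodOneSubXDiv {l}).eval x| ≤ 0 := fun x hx => by
      rw [le_antisymm hx.2 hx.1,
        eval_prodOneSubXDiv_of_mem (Multiset.mem_singleton_self l) hl.ne', abs_zero]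
    obtain ⟨p, hdeg, h0, hsmall⟩ := exists_poly_small_on_multiset_of_small_on_Icc hl.le hlu hΛ
      hq le_rfl (natDegree_prodOneSubXDiv_le {l}) (eval_zero_prodOneSubXDiv _) hroot
    exact ⟨p, hdeg.trans (by simpa using hk), h0, fun x hx => (hsmall x hx).trans hε0.le⟩
  · obtain ⟨p, hdeg, h0, hsmall⟩ := exists_poly_small_on_multiset_of_small_on_Icc hl.le hlu.le
      hΛ hq (by positivity) (natDegree_chebyshevResidual_le l u k)
      (eval_zero_chebyshevResidual hl.le hlu k) (abs_eval_chebyshevResidual_le hl.le hlu k)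
    exact ⟨p, hdeg, h0, fun x hx => (hsmall x hx).trans <| two_mul_exp_neg_le_of_log_two_div_le
      hε0 (le_two_mul_ceil_mul_sqrt_div _ hl (hl.trans hlu))⟩
end
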